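/- The regular pentagon in the plane is not a rational convex polytope: there is no lattice L in ℝ² (a discrete subgroup spanning ℝ²) such that each of the five inward-pointing normal directions to the facets of the regular pentagon contains a nonzero vector of L. -/
import Mathlib


/-- The fifth roots of unity, as vectors in the plane. -/
noncomputable def Y (k : ℕ) : ℝ × ℝ :=
  (Real.cos (2 * Real.pi * k / 5), Real.sin (2 * Real.pi * k / 5))

/-- 2x2 determinant of two plane vectors. -/
noncomputable def det2 (u v : ℝ × ℝ) : ℝ := u.1 * v.2 - u.2 * v.1

lemma det2_coords (a b c d : ℝ) (e0 e1 : ℝ × ℝ) :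
    det2 (a • e0 + b • e1) (c • e0 + d • e1) = (a * d - b * c) * det2 e0 e1 := by
  simp only [det2, Prod.fst_add, Prod.snd_add, Prod.smul_fst, Prod.smul_snd, smul_eq_mul]
  ring

lemma det2_Y (c d : ℝ) (i j : ℕ) :
    det2 (c • (-(Y i))) (d • (-(Y j)))
      = c * d * Real.sin (2 * Real.pi * j / 5 - 2 * Real.pi * i / 5) := by
  simp only [det2, Y, Prod.fst_neg, Prod.snd_neg, Prod.smul_fst, Prod.smul_snd, smul_eq_mul]
  rw [Real.sin_sub]
  ring

set_option maxHeartbeats 1000000 in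
/-- The regular pentagon is not a rational convex polytope: there is no lattice
`L ⊂ ℝ²` (discrete subgroup spanning `ℝ²`) such that each of the five inward
normal directions `-Y k` to the facets of the regular pentagon contains a
nonzero vector of `L`. -/
theorem pentagon_not_rational :
    ¬ ∃ L : AddSubgroup (ℝ × ℝ),
      (∃ ε > 0, ∀ v ∈ L, v ≠ 0 → ε ≤ ‖v‖) ∧
      Submodule.span ℝ (L : Set (ℝ × ℝ)) = ⊤ ∧
      ∀ k : Fin 5, ∃ v ∈ L, v ≠ 0 ∧ ∃ c : ℝ, 0 < c ∧ v = c • (-(Y k)) := by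
  rintro ⟨L, ⟨ε, hε, hsep⟩, hspan, hnorm⟩
  set M : Submodule ℤ (ℝ × ℝ) := AddSubgroup.toIntSubmodule L with hMdef
  have hMset : (M : Set (ℝ × ℝ)) = (L : Set (ℝ × ℝ)) := AddSubgroup.coe_toIntSubmodule L
  -- discreteness
  have hdisc : DiscreteTopology M := by
    rw [discreteTopology_iff_isOpen_singleton_zero]
    have hset : {(0 : M)} = (Subtype.val ⁻¹' (Metric.ball (0 : ℝ × ℝ) ε)) := by
      ext x
      simp only [Set.mem_singleton_iff, Set.mem_preimage, Metric.mem_ball, dist_zero_right]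
      constructor
      · rintro rfl; simpa using hε
      · intro hx
        by_contra hx0
        have hxL : (x : ℝ × ℝ) ∈ L := by
          rw [← SetLike.mem_coe, ← hMset]; exact x.2
        have hxne : (x : ℝ × ℝ) ≠ 0 := fun h => hx0 (Subtype.ext h)
        exact absurd hx (not_lt.mpr (hsep _ hxL hxne))
    rw [hset]
    exact Metric.isOpen_ball.preimage continuous_subtype_val
  have hzl : IsZLattice ℝ M := ⟨by rw [hMset]; exact hspan⟩
  have hfree : Module.Free ℤ M := ZLattice.module_free ℝ M
  have hfin : Module.Finite ℤ M := ZLattice.module_finite ℝ M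
  have hrk : Module.finrank ℤ M = 2 := by
    rw [ZLattice.rank ℝ M, Module.finrank_prod, Module.finrank_self]
  have hcard : Fintype.card (Module.Free.ChooseBasisIndex ℤ M) = 2 := by
    rw [← Module.finrank_eq_card_chooseBasisIndex]; exact hrk
  let e := (Module.Free.chooseBasis ℤ M).reindex (Fintype.equivFinOfCardEq hcard)
  set E0 : ℝ × ℝ := (e 0 : ℝ × ℝ) with hE0
  set E1 : ℝ × ℝ := (e 1 : ℝ × ℝ) with hE1
  have hrep : ∀ w : M,
      (w : ℝ × ℝ) = ((e.repr w 0 : ℤ) : ℝ) • E0 + ((e.repr w 1 : ℤ) : ℝ) • E1 := by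
    intro w
    have h := e.sum_repr w
    rw [Fin.sum_univ_two] at h
    have h2 := congrArg (Subtype.val : M → ℝ × ℝ) h
    simp only [Submodule.coe_add, Submodule.coe_smul] at h2
    rw [← h2, Int.cast_smul_eq_zsmul, Int.cast_smul_eq_zsmul]
  set D : ℝ := det2 E0 E1 with hD
  -- extract the four normal vectors
  obtain ⟨v0, hv0L, hv0ne, c0, hc0, hveq0⟩ := hnorm ⟨0, by norm_num⟩
  obtain ⟨v1, hv1L, hv1ne, c1, hc1, hveq1⟩ := hnorm ⟨1, by norm_num⟩
  obtain ⟨v2, hv2L, hv2ne, c2, hc2, hveq2⟩ := hnorm ⟨2, by norm_num⟩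
  obtain ⟨v3, hv3L, hv3ne, c3, hc3, hveq3⟩ := hnorm ⟨3, by norm_num⟩
  have hv0M : v0 ∈ M := by rw [← SetLike.mem_coe, hMset]; exact hv0L
  have hv1M : v1 ∈ M := by rw [← SetLike.mem_coe, hMset]; exact hv1L
  have hv2M : v2 ∈ M := by rw [← SetLike.mem_coe, hMset]; exact hv2L
  have hv3M : v3 ∈ M := by rw [← SetLike.mem_coe, hMset]; exact hv3L
  set n00 : ℤ := e.repr ⟨v0, hv0M⟩ 0 with hn00
  set n01 : ℤ := e.repr ⟨v0, hv0M⟩ 1 with hn01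
  set n10 : ℤ := e.repr ⟨v1, hv1M⟩ 0 with hn10
  set n11 : ℤ := e.repr ⟨v1, hv1M⟩ 1 with hn11
  set n20 : ℤ := e.repr ⟨v2, hv2M⟩ 0 with hn20
  set n21 : ℤ := e.repr ⟨v2, hv2M⟩ 1 with hn21
  set n30 : ℤ := e.repr ⟨v3, hv3M⟩ 0 with hn30
  set n31 : ℤ := e.repr ⟨v3, hv3M⟩ 1 with hn31
  have r0 : v0 = (n00 : ℝ) • E0 + (n01 : ℝ) • E1 := hrep ⟨v0, hv0M⟩
  have r1 : v1 = (n10 : ℝ) • E0 + (n11 : ℝ) • E1 := hrep ⟨v1, hv1M⟩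
  have r2 : v2 = (n20 : ℝ) • E0 + (n21 : ℝ) • E1 := hrep ⟨v2, hv2M⟩
  have r3 : v3 = (n30 : ℝ) • E0 + (n31 : ℝ) • E1 := hrep ⟨v3, hv3M⟩
  set s1 : ℝ := Real.sin (2 * Real.pi / 5) with hs1
  set s2 : ℝ := Real.sin (Real.pi / 5) with hs2
  have hpi := Real.pi_pos
  have hs1pos : 0 < s1 := Real.sin_pos_of_pos_of_lt_pi (by linarith) (by linarith)
  have hs2pos : 0 < s2 := Real.sin_pos_of_pos_of_lt_pi (by linarith) (by linarith)
  set m01 : ℤ := n00 * n11 - n01 * n10 with hm01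
  set m23 : ℤ := n20 * n31 - n21 * n30 with hm23
  set m02 : ℤ := n00 * n21 - n01 * n20 with hm02
  set m13 : ℤ := n10 * n31 - n11 * n30 with hm13
  -- the four determinant identities
  have E01 : (m01 : ℝ) * D = c0 * c1 * s1 := by
    have hA : det2 v0 v1 = (m01 : ℝ) * D := by rw [r0, r1, det2_coords, hm01]; push_cast; ring
    have hB : det2 v0 v1 = c0 * c1 * s1 := by
      rw [hveq0, hveq1, det2_Y]
      rw [show 2 * Real.pi * ((⟨1, by norm_num⟩ : Fin 5) : ℕ) / 5
            - 2 * Real.pi * ((⟨0, by norm_num⟩ : Fin 5) : ℕ) / 5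
          = 2 * Real.pi / 5 from by push_cast; ring]
    rw [← hA, hB]
  have E23 : (m23 : ℝ) * D = c2 * c3 * s1 := by
    have hA : det2 v2 v3 = (m23 : ℝ) * D := by rw [r2, r3, det2_coords, hm23]; push_cast; ring
    have hB : det2 v2 v3 = c2 * c3 * s1 := by
      rw [hveq2, hveq3, det2_Y]
      rw [show 2 * Real.pi * ((⟨3, by norm_num⟩ : Fin 5) : ℕ) / 5
            - 2 * Real.pi * ((⟨2, by norm_num⟩ : Fin 5) : ℕ) / 5
          = 2 * Real.pi / 5 from by push_cast; ring]
    rw [← hA, hB]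
  have E02 : (m02 : ℝ) * D = c0 * c2 * s2 := by
    have hA : det2 v0 v2 = (m02 : ℝ) * D := by rw [r0, r2, det2_coords, hm02]; push_cast; ring
    have hB : det2 v0 v2 = c0 * c2 * s2 := by
      rw [hveq0, hveq2, det2_Y]
      rw [show 2 * Real.pi * ((⟨2, by norm_num⟩ : Fin 5) : ℕ) / 5
            - 2 * Real.pi * ((⟨0, by norm_num⟩ : Fin 5) : ℕ) / 5
          = Real.pi - Real.pi / 5 by push_cast; ring, Real.sin_pi_sub]
    rw [← hA, hB]
  have E13 : (m13 : ℝ) * D = c1 * c3 * s2 := by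
    have hA : det2 v1 v3 = (m13 : ℝ) * D := by rw [r1, r3, det2_coords, hm13]; push_cast; ring
    have hB : det2 v1 v3 = c1 * c3 * s2 := by
      rw [hveq1, hveq3, det2_Y]
      rw [show 2 * Real.pi * ((⟨3, by norm_num⟩ : Fin 5) : ℕ) / 5
            - 2 * Real.pi * ((⟨1, by norm_num⟩ : Fin 5) : ℕ) / 5
          = Real.pi - Real.pi / 5 by push_cast; ring, Real.sin_pi_sub]
    rw [← hA, hB]
  -- nonvanishing
  have hDne : D ≠ 0 := by
    intro h
    rw [h, mul_zero] at E01
    nlinarith [mul_pos (mul_pos hc0 hc1) hs1pos]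
  have hm01ne : (m01 : ℝ) ≠ 0 := by
    intro h; rw [h, zero_mul] at E01; nlinarith [mul_pos (mul_pos hc0 hc1) hs1pos]
  have hm23ne : (m23 : ℝ) ≠ 0 := by
    intro h; rw [h, zero_mul] at E23; nlinarith [mul_pos (mul_pos hc2 hc3) hs1pos]
  -- the key rational relation
  have F1 : ((m02 : ℝ) * D) * ((m13 : ℝ) * D) * s1 ^ 2
      = ((m01 : ℝ) * D) * ((m23 : ℝ) * D) * s2 ^ 2 := by
    rw [E01, E23, E02, E13]; ring
  have key : (m02 : ℝ) * (m13 : ℝ) * s1 ^ 2 = (m01 : ℝ) * (m23 : ℝ) * s2 ^ 2 := by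
    have hD2 : D ^ 2 ≠ 0 := pow_ne_zero _ hDne
    apply mul_right_cancel₀ hD2
    linear_combination F1
  -- trig values
  have h5 : Real.sqrt 5 ^ 2 = 5 := Real.sq_sqrt (by norm_num)
  have hcos : Real.cos (Real.pi / 5) = (1 + Real.sqrt 5) / 4 := Real.cos_pi_div_five
  have hs2sq : s2 ^ 2 = (5 - Real.sqrt 5) / 8 := by
    have hpyth := Real.sin_sq_add_cos_sq (Real.pi / 5)
    rw [hcos] at hpyth
    rw [hs2]
    linear_combination hpyth - (1 / 16 : ℝ) * h5
  have hs1sq : s1 ^ 2 = (5 + Real.sqrt 5) / 8 := by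
    have hdb : s1 = 2 * s2 * Real.cos (Real.pi / 5) := by
      rw [hs1, hs2, show 2 * Real.pi / 5 = 2 * (Real.pi / 5) by ring, Real.sin_two_mul]
    rw [hdb, hcos]
    have : (2 * s2 * ((1 + Real.sqrt 5) / 4)) ^ 2
        = 4 * s2 ^ 2 * ((1 + Real.sqrt 5) / 4) ^ 2 := by ring
    rw [this, hs2sq]
    linear_combination ((3 - Real.sqrt 5) / 32) * h5
  -- derive rationality of √5
  set a : ℤ := m02 * m13 with ha
  set b : ℤ := m01 * m23 with hb
  have hbne : b ≠ 0 := by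
    rw [hb]
    exact mul_ne_zero (by exact_mod_cast hm01ne) (by exact_mod_cast hm23ne)
  have hrel : Real.sqrt 5 * ((a : ℝ) + (b : ℝ)) = 5 * ((b : ℝ) - (a : ℝ)) := by
    rw [hs1sq, hs2sq] at key
    push_cast [ha, hb]
    linear_combination 8 * key
  have habne : (a : ℤ) + b ≠ 0 := by
    intro h
    have h' : ((a : ℝ) + (b : ℝ)) = 0 := by exact_mod_cast congrArg (Int.cast : ℤ → ℝ) h
    rw [h', mul_zero] at hrel
    have : (b : ℝ) = (a : ℝ) := by linarith
    have hba : b = a := by exact_mod_cast this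
    have : b = 0 := by omega
    exact hbne this
  have hirr : Irrational (Real.sqrt 5) := by
    have := (by norm_num : Nat.Prime 5).irrational_sqrt
    simpa using this
  set q : ℚ := ((5 * (b - a) : ℤ) : ℚ) / ((a + b : ℤ) : ℚ) with hq
  have habneR : ((a : ℝ) + (b : ℝ)) ≠ 0 := by
    intro h
    exact habne (by exact_mod_cast h)
  have hcast : (q : ℝ) = Real.sqrt 5 := by
    rw [hq]
    push_cast
    rw [div_eq_iff habneR]
    linear_combination -hrel
  exact hirr ⟨q, hcast⟩
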